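/- Let A be a left brace with A^s = 0 for some s (left nilpotent of index at most s). For a, b ∈ A define inductively d_0 = a, d_0' = b, d_{i+1} = d_i + d_i', d_{i+1}' = d_i * d_i'. Then for every c ∈ A: (a+b)*c = a*c + b*c + Σ_{i=0}^{2s} (−1)^{i+1}((d_i*d_i')*c − d_i*(d_i'*c)). -/
import Mathlib


class LeftBrace (A : Type*) extends AddCommGroup A where
  circ : A → A → A
  circ_assoc : ∀ a b c : A, circ (circ a b) c = circ a (circ b c)
  circ_zero : ∀ a : A, circ a 0 = a
  zero_circ : ∀ a : A, circ 0 a = a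
  inv : A → A
  circ_inv : ∀ a : A, circ a (inv a) = 0
  inv_circ : ∀ a : A, circ (inv a) a = 0
  circ_add : ∀ a b c : A, circ a (b + c) + a = circ a b + circ a c

namespace LeftBrace

variable {A : Type*} [LeftBrace A]

def star (a b : A) : A := circ a b - a - b

def subStarSet (S T : Set A) : AddSubgroup A :=
  AddSubgroup.closure {x | ∃ a ∈ S, ∃ b ∈ T, x = star a b}

def subStar (S T : AddSubgroup A) : AddSubgroup A := subStarSet (S : Set A) (T : Set A)

/-- `leftPow A m` is `A^{m+1}` of the left chain `A^1 = A`, `A^{i+1} = A * A^i`. -/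
def leftPow (A : Type*) [LeftBrace A] : ℕ → AddSubgroup A
  | 0 => ⊤
  | m + 1 => subStar ⊤ (leftPow A m)

def leftIdx (A : Type*) [LeftBrace A] (m : ℕ) : AddSubgroup A := leftPow A (m - 1)

/-- `rightPow A m` is `A^{(m+1)}` of the right chain `A^{(1)} = A`, `A^{(i+1)} = A^{(i)} * A`. -/
def rightPow (A : Type*) [LeftBrace A] : ℕ → AddSubgroup A
  | 0 => ⊤
  | m + 1 => subStar (rightPow A m) ⊤

def rightIdx (A : Type*) [LeftBrace A] (m : ℕ) : AddSubgroup A := rightPow A (m - 1)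

def strongPow (A : Type*) [LeftBrace A] : ℕ → AddSubgroup A
  | 0 => ⊤
  | m + 1 => ⨆ j : Fin (m + 1), subStar (strongPow A j) (strongPow A (m - j))
  termination_by m => m
  decreasing_by
  · exact j.isLt
  · exact Nat.lt_succ_of_le (Nat.sub_le m j)

def strongIdx (A : Type*) [LeftBrace A] (m : ℕ) : AddSubgroup A := strongPow A (m - 1)

/-- An ideal of a left brace, as a subset: closed under the additive group
operations, absorbing under `*` on both sides, and normal in `(A, ∘)`. -/
def IsIdeal (I : Set A) : Prop :=
  (0 : A) ∈ I ∧ (∀ x ∈ I, ∀ y ∈ I, x + y ∈ I) ∧ (∀ x ∈ I, -x ∈ I) ∧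
  (∀ a : A, ∀ i ∈ I, star a i ∈ I) ∧ (∀ a : A, ∀ i ∈ I, star i a ∈ I) ∧
  (∀ a : A, ∀ i ∈ I, circ (circ a i) (inv a) ∈ I)

/-- `circPow a m` is the product of `m` copies of `a` in the group `(A, ∘)`. -/
def circPow (a : A) : ℕ → A
  | 0 => 0
  | m + 1 => circ a (circPow a m)

/-- Membership in the subgroup of `(A, ∘)` generated by a subset. -/
inductive circClosure (S : Set A) : A → Prop
  | of : ∀ x ∈ S, circClosure S x
  | zero : circClosure S 0
  | mul : ∀ x y : A, circClosure S x → circClosure S y → circClosure S (circ x y)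
  | inv : ∀ x : A, circClosure S x → circClosure S (inv x)

end LeftBrace

open LeftBrace

/-- The sequence `d_0 = (a,b)`, `d_{i+1} = (d_i + d_i', d_i * d_i')`. -/
def dSeq {A : Type*} [LeftBrace A] (a b : A) : ℕ → A × A
  | 0 => (a, b)
  | i + 1 => ((dSeq a b i).1 + (dSeq a b i).2, star (dSeq a b i).1 (dSeq a b i).2)

section Aux

variable {A : Type*} [LeftBrace A]

lemma circ_add' (a x y : A) : circ a (x + y) = circ a x + circ a y - a := by
  rw [eq_sub_iff_add_eq]; exact LeftBrace.circ_add a x y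

lemma circ_neg' (a y : A) : circ a (-y) = a + a - circ a y := by
  have h := LeftBrace.circ_add a y (-y)
  rw [add_neg_cancel, LeftBrace.circ_zero] at h
  rw [eq_sub_iff_add_eq, add_comm]
  exact h.symm

lemma star_zero_right (a : A) : LeftBrace.star a 0 = 0 := by
  simp [LeftBrace.star, LeftBrace.circ_zero]

lemma star_zero_left (b : A) : LeftBrace.star 0 b = 0 := by
  simp [LeftBrace.star, LeftBrace.zero_circ]

/-- `(a∘b)*c = a*(b*c) + a*c + b*c`. -/
lemma circ_star (a b c : A) :
    LeftBrace.star (circ a b) c =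
      LeftBrace.star a (LeftBrace.star b c) + LeftBrace.star a c + LeftBrace.star b c := by
  simp only [LeftBrace.star]
  rw [LeftBrace.circ_assoc]
  rw [show circ b c - b - c = circ b c + -b + -c by abel]
  rw [circ_add', circ_add', circ_neg', circ_neg']
  abel

/-- key recursion: `((d+d') + d*d')*c = d*(d'*c) + d*c + d'*c`. -/
lemma key_rec (d d' c : A) :
    LeftBrace.star (d + d' + LeftBrace.star d d') c =
      LeftBrace.star d (LeftBrace.star d' c) + LeftBrace.star d c + LeftBrace.star d' c := by
  have h : d + d' + LeftBrace.star d d' = circ d d' := by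
    simp only [LeftBrace.star]; abel
  rw [h, circ_star]

lemma dSeq_snd_mem (a b : A) : ∀ i, (dSeq a b i).2 ∈ leftPow A i := by
  intro i
  induction i with
  | zero => exact AddSubgroup.mem_top _
  | succ n ih =>
      show LeftBrace.star (dSeq a b n).1 (dSeq a b n).2 ∈ subStar ⊤ (leftPow A n)
      exact AddSubgroup.subset_closure ⟨(dSeq a b n).1, trivial, (dSeq a b n).2, ih, rfl⟩

lemma dSeq_snd_eq_zero (a b : A) (m : ℕ) (hm : (dSeq a b m).2 = 0) :
    ∀ k, (dSeq a b (m + k)).2 = 0 := by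
  intro k
  induction k with
  | zero => exact hm
  | succ n ih =>
      show LeftBrace.star (dSeq a b (m + n)).1 (dSeq a b (m + n)).2 = 0
      rw [ih, star_zero_right]

lemma main_expansion (a b c : A) (n : ℕ) :
    LeftBrace.star (a + b) c = LeftBrace.star a c + LeftBrace.star b c +
      (∑ i ∈ Finset.range (n + 1), (-1 : ℤ) ^ (i + 1) •
        (LeftBrace.star (LeftBrace.star (dSeq a b i).1 (dSeq a b i).2) c -
          LeftBrace.star (dSeq a b i).1 (LeftBrace.star (dSeq a b i).2 c))) +
      (-1 : ℤ) ^ (n + 1) •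
        (LeftBrace.star ((dSeq a b (n + 1)).1 + (dSeq a b (n + 1)).2) c -
          LeftBrace.star (dSeq a b (n + 1)).1 c - LeftBrace.star (dSeq a b (n + 1)).2 c) := by
  induction n with
  | zero =>
      simp only [zero_add, Finset.sum_range_one]
      show LeftBrace.star (a + b) c = LeftBrace.star a c + LeftBrace.star b c +
        (-1 : ℤ) ^ 1 • (LeftBrace.star (LeftBrace.star a b) c -
          LeftBrace.star a (LeftBrace.star b c)) +
        (-1 : ℤ) ^ 1 • (LeftBrace.star (a + b + LeftBrace.star a b) c -
          LeftBrace.star (a + b) c - LeftBrace.star (LeftBrace.star a b) c)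
      rw [key_rec]
      simp only [pow_one, neg_smul, one_smul]
      abel
  | succ n ih =>
      rw [ih]; clear ih
      conv_rhs => rw [Finset.sum_range_succ]
      set d : A := (dSeq a b (n + 1)).1 with hd
      set d' : A := (dSeq a b (n + 1)).2 with hd'
      have h1 : (dSeq a b (n + 1 + 1)).1 = d + d' := rfl
      have h2 : (dSeq a b (n + 1 + 1)).2 = LeftBrace.star d d' := rfl
      rw [h1, h2]
      have hterm : (-1 : ℤ) ^ (n + 1) •
            (LeftBrace.star (d + d') c - LeftBrace.star d c - LeftBrace.star d' c)
          = (-1 : ℤ) ^ (n + 1 + 1) •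
              (LeftBrace.star (LeftBrace.star d d') c -
                LeftBrace.star d (LeftBrace.star d' c))
            + (-1 : ℤ) ^ (n + 1 + 1) •
              (LeftBrace.star (d + d' + LeftBrace.star d d') c -
                LeftBrace.star (d + d') c - LeftBrace.star (LeftBrace.star d d') c) := by
        rw [← smul_add]
        rw [show ((-1 : ℤ)) ^ (n + 1 + 1) = -(-1 : ℤ) ^ (n + 1) by ring, neg_smul, ← smul_neg]
        congr 1
        rw [key_rec]
        abel
      rw [hterm]
      abel

end Aux

/-- Lemma 15 of [Engel]: in a left brace with `A^s = 0`,
`(a+b)*c = a*c + b*c + Σ_{i=0}^{2s} (−1)^{i+1}((d_i*d_i')*c − d_i*(d_i'*c))`. -/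
theorem add_star_expansion (A : Type*) [LeftBrace A] (s : ℕ) (hs : leftIdx A s = ⊥)
    (a b c : A) :
    star (a + b) c = star a c + star b c +
      ∑ i ∈ Finset.range (2 * s + 1), (-1 : ℤ) ^ (i + 1) •
        (star (star (dSeq a b i).1 (dSeq a b i).2) c -
          star (dSeq a b i).1 (star (dSeq a b i).2 c)) := by
  have hz : (dSeq a b (2 * s + 1)).2 = 0 := by
    have hmem := dSeq_snd_mem a b (s - 1)
    rw [show leftPow A (s - 1) = leftIdx A s from rfl, hs, AddSubgroup.mem_bot] at hmem
    have := dSeq_snd_eq_zero a b (s - 1) hmem (2 * s + 1 - (s - 1))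
    rwa [show s - 1 + (2 * s + 1 - (s - 1)) = 2 * s + 1 by omega] at this
  have h := main_expansion a b c (2 * s)
  rw [hz, add_zero, star_zero_left, sub_zero, sub_self, smul_zero, add_zero] at h
  exact h
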